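/- The linear functions r1 = (q1p2-p1q2)+(q4p5-p4q5), r2 = (q2p3-p2q3)+(q3p4-p3q4), r3 = (q1p3-p1q3)+(q5p3-p5q3), r4 = (q1p4-p1q4)+(q2p5-p2q5) on T*R^5 satisfy the Poisson bracket relations {r1, r2} = -r3, {r1, r3} = r2, {r1, r4} = 0, {r4, r2} = r3, {r4, r3} = -r2, {r2, r3} = r4 - r1. -/

import Mathlib

/-- Canonical Poisson bracket of two functions on `T*ℝⁿ ≅ (Fin n → ℝ) × (Fin n → ℝ)`,
`{f,g} = ∑ i, (∂f/∂qᵢ ∂g/∂pᵢ - ∂f/∂pᵢ ∂g/∂qᵢ)`. -/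
noncomputable def pb {n : ℕ} (f g : (Fin n → ℝ) × (Fin n → ℝ) → ℝ) :
    (Fin n → ℝ) × (Fin n → ℝ) → ℝ := fun x =>
  ∑ i : Fin n,
    (deriv (fun t => f (Function.update x.1 i t, x.2)) (x.1 i) *
       deriv (fun t => g (x.1, Function.update x.2 i t)) (x.2 i) -
     deriv (fun t => f (x.1, Function.update x.2 i t)) (x.2 i) *
       deriv (fun t => g (Function.update x.1 i t, x.2)) (x.1 i))

/-!
Each `rᵢ` is a momentum map `J_A(q, p) = pᵀ A q` with `A` antisymmetric, i.e. a sum of angular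
momenta. Since `A ↦ J_A` is a Lie algebra homomorphism from `𝔤𝔩(n)` to the Poisson algebra
(`∂J_A/∂q = Aᵀp`, `∂J_A/∂p = A q`), the six relations reduce to commutator identities between
`5 × 5` matrices, which follow from `Eᵢⱼ Eₖₗ = δⱼₖ Eᵢₗ` for matrix units.
-/

open Matrix

theorem deriv_dotProduct_update {ι : Type*} [Fintype ι] [DecidableEq ι] (v x : ι → ℝ) (i : ι)
    (s : ℝ) : deriv (fun t => v ⬝ᵥ Function.update x i t) s = v i :=
  (((dotProductBilin ℝ ℝ v).toContinuousLinearMap.hasFDerivAt).comp_hasDerivAt s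
    (hasDerivAt_update x i s)).deriv.trans (by simp)

def momentMap {n : ℕ} (A : Matrix (Fin n) (Fin n) ℝ) (x : (Fin n → ℝ) × (Fin n → ℝ)) : ℝ :=
  x.2 ⬝ᵥ A *ᵥ x.1

section momentMap

variable {n : ℕ}

theorem deriv_momentMap_update_fst (A : Matrix (Fin n) (Fin n) ℝ) (q p : Fin n → ℝ) (i : Fin n)
    (s : ℝ) : deriv (fun t => momentMap A (Function.update q i t, p)) s = (p ᵥ* A) i := by
  simp only [momentMap, dotProduct_mulVec]
  exact deriv_dotProduct_update _ _ _ _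

theorem deriv_momentMap_update_snd (A : Matrix (Fin n) (Fin n) ℝ) (q p : Fin n → ℝ) (i : Fin n)
    (s : ℝ) : deriv (fun t => momentMap A (q, Function.update p i t)) s = (A *ᵥ q) i := by
  simp only [momentMap, dotProduct_comm _ (A *ᵥ q)]
  exact deriv_dotProduct_update _ _ _ _

theorem pb_momentMap (A B : Matrix (Fin n) (Fin n) ℝ) :
    pb (momentMap A) (momentMap B) = momentMap ⁅A, B⁆ := by
  funext x
  simp only [pb, deriv_momentMap_update_fst, deriv_momentMap_update_snd, Finset.sum_sub_distrib]
  change x.2 ᵥ* A ⬝ᵥ B *ᵥ x.1 - A *ᵥ x.1 ⬝ᵥ x.2 ᵥ* B = _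
  rw [dotProduct_comm (A *ᵥ x.1), ← dotProduct_mulVec, ← dotProduct_mulVec, mulVec_mulVec,
    mulVec_mulVec, ← dotProduct_sub, ← sub_mulVec, ← Ring.lie_def]
  rfl

theorem momentMap_add (A B : Matrix (Fin n) (Fin n) ℝ) :
    momentMap (A + B) = momentMap A + momentMap B := by
  funext x
  simp [momentMap, add_mulVec, dotProduct_add]

theorem momentMap_sub (A B : Matrix (Fin n) (Fin n) ℝ) :
    momentMap (A - B) = momentMap A - momentMap B := by
  funext x
  simp [momentMap, sub_mulVec, dotProduct_sub]

theorem momentMap_neg (A : Matrix (Fin n) (Fin n) ℝ) : momentMap (-A) = -momentMap A := by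
  funext x
  simp [momentMap, neg_mulVec, dotProduct_neg]

theorem momentMap_zero : momentMap (0 : Matrix (Fin n) (Fin n) ℝ) = 0 := by
  funext x
  simp [momentMap]

def rot (a b : Fin n) : Matrix (Fin n) (Fin n) ℝ := single b a 1 - single a b 1

theorem momentMap_rot (a b : Fin n) (x : (Fin n → ℝ) × (Fin n → ℝ)) :
    momentMap (rot a b) x = x.1 a * x.2 b - x.2 a * x.1 b := by
  simp only [momentMap, rot, sub_mulVec, dotProduct_sub, single_mulVec_eq, dotProduct_smul,
    dotProduct_single, smul_eq_mul]
  ring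

end momentMap

def r₁ : (Fin 5 → ℝ) × (Fin 5 → ℝ) → ℝ :=
  fun x => (x.1 0 * x.2 1 - x.2 0 * x.1 1) + (x.1 3 * x.2 4 - x.2 3 * x.1 4)

def r₂ : (Fin 5 → ℝ) × (Fin 5 → ℝ) → ℝ :=
  fun x => (x.1 1 * x.2 2 - x.2 1 * x.1 2) + (x.1 2 * x.2 3 - x.2 2 * x.1 3)

def r₃ : (Fin 5 → ℝ) × (Fin 5 → ℝ) → ℝ :=
  fun x => (x.1 0 * x.2 2 - x.2 0 * x.1 2) + (x.1 4 * x.2 2 - x.2 4 * x.1 2)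

def r₄ : (Fin 5 → ℝ) × (Fin 5 → ℝ) → ℝ :=
  fun x => (x.1 0 * x.2 3 - x.2 0 * x.1 3) + (x.1 1 * x.2 4 - x.2 1 * x.1 4)

def R₁ : Matrix (Fin 5) (Fin 5) ℝ := rot 0 1 + rot 3 4
def R₂ : Matrix (Fin 5) (Fin 5) ℝ := rot 1 2 + rot 2 3
def R₃ : Matrix (Fin 5) (Fin 5) ℝ := rot 0 2 + rot 4 2
def R₄ : Matrix (Fin 5) (Fin 5) ℝ := rot 0 3 + rot 1 4

theorem r₁_eq_momentMap : r₁ = momentMap R₁ := by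
  funext x; simp only [r₁, R₁, momentMap_add, Pi.add_apply, momentMap_rot]

theorem r₂_eq_momentMap : r₂ = momentMap R₂ := by
  funext x; simp only [r₂, R₂, momentMap_add, Pi.add_apply, momentMap_rot]

theorem r₃_eq_momentMap : r₃ = momentMap R₃ := by
  funext x; simp only [r₃, R₃, momentMap_add, Pi.add_apply, momentMap_rot]

theorem r₄_eq_momentMap : r₄ = momentMap R₄ := by
  funext x; simp only [r₄, R₄, momentMap_add, Pi.add_apply, momentMap_rot]

theorem lie_R_relations :
    ⁅R₁, R₂⁆ = -R₃ ∧ ⁅R₁, R₃⁆ = R₂ ∧ ⁅R₁, R₄⁆ = 0 ∧ ⁅R₄, R₂⁆ = R₃ ∧ ⁅R₄, R₃⁆ = -R₂ ∧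
      ⁅R₂, R₃⁆ = R₄ - R₁ := by
  refine ⟨?_, ?_, ?_, ?_, ?_, ?_⟩ <;>
  · simp only [R₁, R₂, R₃, R₄, rot, Ring.lie_def, mul_add, add_mul, mul_sub, sub_mul, mul_one,
      single_mul_single_same, single_mul_single_of_ne, ne_eq, Fin.reduceEq, not_false_eq_true]
    abel

theorem pb_r_relations :
    pb r₁ r₂ = -r₃ ∧ pb r₁ r₃ = r₂ ∧ pb r₁ r₄ = 0 ∧ pb r₄ r₂ = r₃ ∧ pb r₄ r₃ = -r₂ ∧
      pb r₂ r₃ = r₄ - r₁ := by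
  obtain ⟨h₁₂, h₁₃, h₁₄, h₄₂, h₄₃, h₂₃⟩ := lie_R_relations
  simp only [r₁_eq_momentMap, r₂_eq_momentMap, r₃_eq_momentMap, r₄_eq_momentMap, pb_momentMap,
    h₁₂, h₁₃, h₁₄, h₄₂, h₄₃, h₂₃, momentMap_neg, momentMap_sub, momentMap_zero, and_self]

theorem stmt12 :
    pb (n := 5) (fun x => (x.1 0*x.2 1 - x.2 0*x.1 1) + (x.1 3*x.2 4 - x.2 3*x.1 4)) (fun x => (x.1 1*x.2 2 - x.2 1*x.1 2) + (x.1 2*x.2 3 - x.2 2*x.1 3)) = (fun x => -((x.1 0*x.2 2 - x.2 0*x.1 2) + (x.1 4*x.2 2 - x.2 4*x.1 2))) ∧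
    pb (n := 5) (fun x => (x.1 0*x.2 1 - x.2 0*x.1 1) + (x.1 3*x.2 4 - x.2 3*x.1 4)) (fun x => (x.1 0*x.2 2 - x.2 0*x.1 2) + (x.1 4*x.2 2 - x.2 4*x.1 2)) = (fun x => (x.1 1*x.2 2 - x.2 1*x.1 2) + (x.1 2*x.2 3 - x.2 2*x.1 3)) ∧
    pb (n := 5) (fun x => (x.1 0*x.2 1 - x.2 0*x.1 1) + (x.1 3*x.2 4 - x.2 3*x.1 4)) (fun x => (x.1 0*x.2 3 - x.2 0*x.1 3) + (x.1 1*x.2 4 - x.2 1*x.1 4)) = 0 ∧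
    pb (n := 5) (fun x => (x.1 0*x.2 3 - x.2 0*x.1 3) + (x.1 1*x.2 4 - x.2 1*x.1 4)) (fun x => (x.1 1*x.2 2 - x.2 1*x.1 2) + (x.1 2*x.2 3 - x.2 2*x.1 3)) = (fun x => (x.1 0*x.2 2 - x.2 0*x.1 2) + (x.1 4*x.2 2 - x.2 4*x.1 2)) ∧
    pb (n := 5) (fun x => (x.1 0*x.2 3 - x.2 0*x.1 3) + (x.1 1*x.2 4 - x.2 1*x.1 4)) (fun x => (x.1 0*x.2 2 - x.2 0*x.1 2) + (x.1 4*x.2 2 - x.2 4*x.1 2)) = (fun x => -((x.1 1*x.2 2 - x.2 1*x.1 2) + (x.1 2*x.2 3 - x.2 2*x.1 3))) ∧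
    pb (n := 5) (fun x => (x.1 1*x.2 2 - x.2 1*x.1 2) + (x.1 2*x.2 3 - x.2 2*x.1 3)) (fun x => (x.1 0*x.2 2 - x.2 0*x.1 2) + (x.1 4*x.2 2 - x.2 4*x.1 2)) = (fun x => ((x.1 0*x.2 3 - x.2 0*x.1 3) + (x.1 1*x.2 4 - x.2 1*x.1 4)) - ((x.1 0*x.2 1 - x.2 0*x.1 1) + (x.1 3*x.2 4 - x.2 3*x.1 4))) :=
  pb_r_relations
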